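/- Let (X,S) be an S-metric space, r ≥ 0, and let (x_n) be a sequence in X. Then the r-limit set LIM^r x_n is sequentially closed: if (y_n) is a sequence with y_n ∈ LIM^r x_n for all n and (y_n) converges to y ∈ X, then y ∈ LIM^r x_n. -/
import Mathlib

/-- An S-metric on a set `X`. -/
structure SMetric (X : Type*) where
  S : X → X → X → ℝ
  nonneg : ∀ x y z, 0 ≤ S x y z
  eq_zero_iff : ∀ x y z, S x y z = 0 ↔ x = y ∧ y = z
  tri : ∀ x y z a, S x y z ≤ S x x a + S y y a + S z z a

/-- `(x n)` is `r`-convergent to `p`. -/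
def SMetric.RConv {X : Type*} (d : SMetric X) (r : ℝ) (x : ℕ → X) (p : X) : Prop :=
  ∀ ε > 0, ∃ k : ℕ, ∀ n ≥ k, d.S (x n) (x n) p < r + ε

/-- The `r`-limit set of `(x n)`. -/
def SMetric.rLimitSet {X : Type*} (d : SMetric X) (r : ℝ) (x : ℕ → X) : Set X :=
  {p | d.RConv r x p}

/-- `(x n)` converges to `p`. -/
def SMetric.Conv {X : Type*} (d : SMetric X) (x : ℕ → X) (p : X) : Prop :=
  ∀ ε > 0, ∃ k : ℕ, ∀ n ≥ k, d.S (x n) (x n) p < ε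

lemma SMetric.self_zero {X : Type*} (d : SMetric X) (x : X) : d.S x x x = 0 :=
  (d.eq_zero_iff x x x).2 ⟨rfl, rfl⟩

lemma SMetric.symm' {X : Type*} (d : SMetric X) (x y : X) : d.S x x y ≤ d.S y y x := by
  have := d.tri x x y x
  simpa [d.self_zero] using this

/-- The r-limit set is sequentially closed. -/
theorem rLimitSet_seq_closed {X : Type*} (d : SMetric X) (r : ℝ) (hr : 0 ≤ r)
    (x : ℕ → X) (y : ℕ → X) (hy : ∀ n, y n ∈ d.rLimitSet r x)
    (p : X) (h : d.Conv y p) : p ∈ d.rLimitSet r x := by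
  intro ε hε
  have hε3 : 0 < ε / 3 := by linarith
  obtain ⟨m, hm⟩ := h (ε / 3) hε3
  obtain ⟨k, hk⟩ := hy m (ε / 3) hε3
  refine ⟨k, fun n hn => ?_⟩
  have h1 : d.S (x n) (x n) p ≤ d.S p p (x n) := d.symm' _ _
  have h2 : d.S p p (x n) ≤ d.S p p (y m) + d.S p p (y m) + d.S (x n) (x n) (y m) :=
    d.tri p p (x n) (y m)
  have h3 : d.S p p (y m) ≤ d.S (y m) (y m) p := d.symm' _ _
  have h4 : d.S (y m) (y m) p < ε / 3 := hm m le_rfl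
  have h5 : d.S (x n) (x n) (y m) < r + ε / 3 := hk n hn
  linarith
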